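/- arXiv:1701.05508 — 2 statements merged into one kernel-verified Lean document; each statement's English description precedes it below -/
import Mathlib

section
/- Let (K,v) be a henselian valued field of residue characteristic p > 0 containing all p-th roots of unity, and let b, c ∈ K with v(b) ≥ (1/(p-1))·v(p) and v(c^p) > v(p). Then 1 + b - pc ∈ (1 + b + c^p)·(K^×)^p. -/
/-!
Let `ζ` be a primitive `p`-th root of unity and `π = 1 - ζ`, so that `v(p) = (p - 1)·v(π)`
(evaluate the `p`-th cyclotomic polynomial at `1`). By Hensel's lemma applied to
`(X + π⁻¹) ^ p - x π⁻ᵖ`, every `x` with `v(x - 1) > p·v(π)` is a `p`-th power. With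
`A = 1 + b + c ^ p` the hypotheses give `v(A (1 - c) ^ p - (1 + b - p c)) > p·v(π)`, by the identity
`A (1 - c) ^ p - (1 + b - p c) = A·E - (b + c ^ p)(p c + c ^ p)` where
`E = (1 - c) ^ p - (1 - p c - c ^ p)` is divisible by `p c²`. Hence
`(1 + b - p c) / (A (1 - c) ^ p)` is a `p`-th power.
-/

open Polynomial

lemma exists_isPrimitiveRoot_of_splits {K : Type*} [Field K] {p : ℕ} (hp : p.Prime)
    (hpK : (p : K) ≠ 0) (hsplit : (X ^ p - 1 : K[X]).Splits) : ∃ ζ : K, IsPrimitiveRoot ζ p := by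
  have : NeZero (p : K) := ⟨hpK⟩
  have hXp : (X ^ p - 1 : K[X]) ≠ 0 := X_pow_sub_C_ne_zero hp.pos 1
  have hdeg : (cyclotomic p K).degree ≠ 0 := by
    rw [degree_cyclotomic, Nat.totient_prime hp, Nat.cast_ne_zero]
    exact Nat.sub_ne_zero_of_lt hp.one_lt
  obtain ⟨ζ, hζ⟩ := (hsplit.of_dvd hXp (cyclotomic.dvd_X_pow_sub_one p K)).exists_eval_eq_zero hdeg
  exact ⟨ζ, isRoot_cyclotomic_iff.1 hζ⟩

namespace Valuation

variable {K : Type*} [Field K] {Γ : Type*} [LinearOrderedCommGroupWithZero Γ] (w : Valuation K Γ)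

lemma map_natCast_le_one (n : ℕ) : w (n : K) ≤ 1 :=
  (w.mem_valuationSubring_iff _).1 (natCast_mem _ n)

lemma map_choose_le {p n : ℕ} (hp : p.Prime) (hn₀ : n ≠ 0) (hnp : n < p) :
    w (p.choose n : K) ≤ w p := by
  obtain ⟨m, hm⟩ := hp.dvd_choose_self hn₀ hnp
  rw [hm, Nat.cast_mul, map_mul]
  exact mul_le_of_le_one_right' (w.map_natCast_le_one m)

lemma map_add_one_pow_sub_le {p : ℕ} (hp : p.Prime) {x : K} (hx : w x ≤ 1) :
    w ((x + 1) ^ p - x ^ p - 1 - p * x) ≤ w p * w x ^ 2 := by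
  have hsum : (x + 1) ^ p - x ^ p - 1 - p * x =
      ∑ i ∈ Finset.Ico 2 p, x ^ i * (p.choose i : K) := by
    rw [add_pow, Finset.sum_range_succ, Finset.range_eq_Ico,
      Finset.sum_eq_sum_Ico_succ_bot hp.pos, Finset.sum_eq_sum_Ico_succ_bot hp.one_lt]
    simp only [one_pow, mul_one, pow_zero, Nat.choose_zero_right, Nat.cast_one, pow_one,
      Nat.choose_one_right, Nat.choose_self]
    ring
  rw [hsum]
  refine w.map_sum_le fun i hi => ?_
  obtain ⟨hi2, hip⟩ := Finset.mem_Ico.1 hi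
  rw [map_mul, map_pow, mul_comm]
  exact mul_le_mul' (w.map_choose_le hp (by omega) hip) (pow_le_pow_right_of_le_one' hx hi2)

lemma map_neg_pow_add_pow_le {p : ℕ} (hp : p.Prime) (x : K) :
    w ((-x) ^ p + x ^ p) ≤ w p * w x ^ p := by
  rcases hp.eq_two_or_odd' with rfl | hodd
  · rw [neg_sq, ← two_mul, map_mul, map_pow, Nat.cast_ofNat]
  · rw [hodd.neg_pow, neg_add_cancel, map_zero]
    exact zero_le

lemma map_one_sub_pow_sub_le {p : ℕ} (hp : p.Prime) {x : K} (hx : w x ≤ 1) :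
    w ((1 - x) ^ p - (1 - p * x - x ^ p)) ≤ w p * w x ^ 2 := by
  have hsplit : (1 - x) ^ p - (1 - p * x - x ^ p) =
      ((-x + 1) ^ p - (-x) ^ p - 1 - p * (-x)) + ((-x) ^ p + x ^ p) := by ring
  rw [hsplit]
  refine w.map_add_le ?_ ?_
  · simpa only [map_neg] using w.map_add_one_pow_sub_le hp (x := -x) (by rwa [map_neg])
  · exact (w.map_neg_pow_add_pow_le hp x).trans
      (mul_le_mul_right (pow_le_pow_right_of_le_one' hx hp.two_le) _)

lemma map_eq_one_of_pow_eq_one {ζ : K} {n : ℕ} (hn : n ≠ 0) (h : ζ ^ n = 1) : w ζ = 1 :=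
  (pow_eq_one_iff_of_nonneg zero_le hn).1 (by rw [← map_pow, h, map_one])

lemma map_one_sub_pow_le {ζ : K} (hζ : w ζ ≤ 1) (i : ℕ) : w (1 - ζ ^ i) ≤ w (1 - ζ) := by
  rw [← mul_neg_geom_sum, map_mul]
  refine mul_le_of_le_one_right' (w.map_sum_le fun j _ => ?_)
  rw [map_pow]
  exact pow_le_one₀ zero_le hζ

lemma map_natCast_eq_of_isPrimitiveRoot {p : ℕ} (hp : p.Prime) {ζ : K}
    (hζ : IsPrimitiveRoot ζ p) : w (p : K) = w (1 - ζ) ^ (p - 1) := by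
  have : Fact p.Prime := ⟨hp⟩
  have hroot {μ : K} (hμ : μ ^ p = 1) : w μ ≤ 1 := (w.map_eq_one_of_pow_eq_one hp.ne_zero hμ).le
  have hprim : ∀ μ ∈ primitiveRoots p K, w (1 - μ) = w (1 - ζ) := by
    intro μ hμ
    rw [mem_primitiveRoots hp.pos] at hμ
    obtain ⟨i, -, rfl⟩ := hζ.eq_pow_of_pow_eq_one hμ.pow_eq_one
    obtain ⟨j, -, hj⟩ := hμ.eq_pow_of_pow_eq_one hζ.pow_eq_one
    refine le_antisymm (w.map_one_sub_pow_le (hroot hζ.pow_eq_one) i) ?_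
    nth_rw 1 [← hj]
    exact w.map_one_sub_pow_le (hroot hμ.pow_eq_one) j
  have hprod : (p : K) = ∏ μ ∈ primitiveRoots p K, (1 - μ) := by
    rw [← eval_one_cyclotomic_prime (R := K), cyclotomic_eq_prod_X_sub_primitiveRoots hζ,
      eval_prod]
    simp
  rw [hprod, map_prod, Finset.prod_congr rfl hprim, Finset.prod_const,
    hζ.card_primitiveRoots, Nat.totient_prime hp]

lemma exists_isRoot_of_henselian [HenselianLocalRing w.valuationSubring] {g : K[X]}
    (hg : g.Monic) (hcoeff : ∀ n, w (g.coeff n) ≤ 1) (h0 : w (g.coeff 0) < 1)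
    (h1 : w (g.coeff 1) = 1) : ∃ z, g.IsRoot z := by
  have hlift : g ∈ lifts (algebraMap w.valuationSubring K) :=
    (lifts_iff_coeff_lifts g).2 fun n => ⟨⟨g.coeff n, hcoeff n⟩, rfl⟩
  obtain ⟨q, rfl, -, hq⟩ := lifts_and_degree_eq_and_monic hlift hg
  rw [coeff_map] at h0 h1
  have hq0 : q.eval 0 ∈ IsLocalRing.maximalIdeal w.valuationSubring := by
    rw [mem_maximalIdeal_iff, ← coeff_zero_eq_eval_zero]
    exact h0
  have hq1 : IsUnit (q.derivative.eval 0) := by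
    rw [← IsLocalRing.notMem_maximalIdeal, mem_maximalIdeal_iff, ← coeff_zero_eq_eval_zero,
      coeff_derivative, zero_add, Nat.cast_zero, zero_add, mul_one]
    exact h1.not_lt
  obtain ⟨z, hz, -⟩ := HenselianLocalRing.is_henselian q hq 0 hq0 hq1
  exact ⟨_, hz.map⟩

theorem exists_pow_eq_of_map_sub_one_lt [HenselianLocalRing w.valuationSubring] {p : ℕ}
    (hp : p.Prime) {ζ : K} (hζ : IsPrimitiveRoot ζ p) {x : K} (hx : w (x - 1) < w (1 - ζ) ^ p) :
    ∃ y : Kˣ, (y : K) ^ p = x := by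
  set π := 1 - ζ
  have hπ0 : π ≠ 0 := sub_ne_zero.2 (hζ.ne_one hp.one_lt).symm
  have hπ0' : w π ≠ 0 := (w.ne_zero_iff).2 hπ0
  have hπ1 : w π ≤ 1 :=
    w.map_sub_le (by rw [map_one]) (w.map_eq_one_of_pow_eq_one hp.ne_zero hζ.pow_eq_one).le
  have hwp : w (p : K) = w π ^ (p - 1) := w.map_natCast_eq_of_isPrimitiveRoot hp hζ
  set g : K[X] := (X + C π⁻¹) ^ p - C (x * π⁻¹ ^ p)
  have hcoeff (n : ℕ) :
      g.coeff n = π⁻¹ ^ (p - n) * p.choose n - if n = 0 then x * π⁻¹ ^ p else 0 := by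
    simp [g, coeff_X_add_C_pow, coeff_C]
  have hg : g.Monic := by
    refine ((monic_X_add_C _).pow p).sub_of_left (degree_C_le.trans_lt ?_)
    rw [degree_pow, degree_X_add_C, nsmul_one, Nat.cast_pos]
    exact hp.pos
  have h0 : w (g.coeff 0) < 1 := by
    rw [hcoeff, if_pos rfl, Nat.sub_zero, Nat.choose_zero_right, Nat.cast_one, mul_one,
      ← one_sub_mul, ← neg_sub, map_mul, map_neg, map_pow, map_inv₀, inv_pow]
    rwa [mul_inv_lt_iff₀ (pow_pos (zero_lt_iff.2 hπ0') p), one_mul]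
  have h1 : w (g.coeff 1) = 1 := by
    rw [hcoeff, if_neg one_ne_zero, sub_zero, Nat.choose_one_right, map_mul, map_pow, map_inv₀,
      hwp, inv_pow, inv_mul_cancel₀ (pow_ne_zero _ hπ0')]
  have hcoeff_le (n : ℕ) : w (g.coeff n) ≤ 1 := by
    rcases Nat.eq_zero_or_pos n with rfl | hn
    · exact h0.le
    rw [hcoeff, if_neg hn.ne', sub_zero]
    rcases lt_trichotomy n p with hnp | rfl | hnp
    · calc w (π⁻¹ ^ (p - n) * p.choose n)
            ≤ (w π ^ (p - n))⁻¹ * (w π ^ (p - n) * w π ^ (n - 1)) := by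
            rw [map_mul, map_pow, map_inv₀, inv_pow, ← pow_add,
              show p - n + (n - 1) = p - 1 by omega, ← hwp]
            exact mul_le_mul_right (w.map_choose_le hp hn.ne' hnp) _
        _ ≤ 1 := by
            rw [inv_mul_cancel_left₀ (pow_ne_zero _ hπ0')]
            exact pow_le_one₀ zero_le hπ1
    · simp
    · simp [Nat.choose_eq_zero_of_lt hnp]
  obtain ⟨z, hz⟩ := w.exists_isRoot_of_henselian hg hcoeff_le h0 h1
  have hy : ((z + π⁻¹) * π) ^ p = x := by
    have := sub_eq_zero.1 (by simpa [g] using hz)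
    rw [mul_pow, this, mul_assoc, inv_mul_cancel₀ (pow_ne_zero _ hπ0), mul_one]
  have hx0 : x ≠ 0 := by
    rintro rfl
    rw [zero_sub, map_neg, map_one] at hx
    exact hx.not_ge (pow_le_one₀ zero_le hπ1)
  refine ⟨Units.mk0 _ fun h => hx0 ?_, hy⟩
  rw [← hy, h, zero_pow hp.ne_zero]

lemma map_mul_one_sub_pow_sub_lt {p : ℕ} (hp : p.Prime) {L : Γ} (hL0 : L ≠ 0) (hL1 : L ≤ 1)
    (hwp : w (p : K) = L ^ (p - 1)) {b c : K} (hb : w b ≤ L) (hc : w c ^ p < L ^ (p - 1)) :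
    w ((1 + b + c ^ p) * (1 - c) ^ p - (1 + b - p * c)) < L ^ p := by
  have hp1 : p - 1 ≠ 0 := Nat.sub_ne_zero_of_lt hp.one_lt
  have hLp : L ^ p = L ^ (p - 1) * L := by rw [← pow_succ, Nat.sub_add_cancel hp.one_le]
  have hc1 : w c < 1 :=
    (pow_lt_one_iff_of_nonneg zero_le hp.ne_zero).1 (hc.trans_le (pow_le_one₀ zero_le hL1))
  have hcp : w (c ^ p) ≤ L := by
    rw [map_pow]
    exact hc.le.trans (pow_le_of_le_one zero_le hL1 hp1)
  have hc2 : w c ^ 2 < L := by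
    refine lt_of_pow_lt_pow_left₀ (p - 1) zero_le ?_
    rw [← pow_mul]
    exact (pow_le_pow_right_of_le_one' hc1.le (by omega)).trans_lt hc
  have hA : w (1 + b + c ^ p) ≤ 1 :=
    w.map_add_le (w.map_add_le w.map_one.le (hb.trans hL1)) (hcp.trans hL1)
  have hE : w ((1 - c) ^ p - (1 - p * c - c ^ p)) < L ^ p :=
    calc _ ≤ L ^ (p - 1) * w c ^ 2 := hwp ▸ w.map_one_sub_pow_sub_le hp hc1.le
      _ < L ^ p := hLp ▸ mul_lt_mul_of_pos_left hc2 (pow_pos (zero_lt_iff.2 hL0) _)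
  have hbc : w (b + c ^ p) ≤ L := w.map_add_le hb hcp
  have hpc : w (p * c + c ^ p) < L ^ (p - 1) := by
    refine w.map_add_lt ?_ (by rwa [map_pow])
    rw [map_mul, hwp]
    exact mul_lt_of_lt_one_right (pow_pos (zero_lt_iff.2 hL0) _) hc1
  have hidentity : (1 + b + c ^ p) * (1 - c) ^ p - (1 + b - p * c) =
      (1 + b + c ^ p) * ((1 - c) ^ p - (1 - p * c - c ^ p)) - (b + c ^ p) * (p * c + c ^ p) := by
    ring
  rw [hidentity]
  refine w.map_sub_lt ?_ ?_
  · rw [map_mul]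
    exact (mul_le_of_le_one_left zero_le hA).trans_lt hE
  · rw [map_mul, hLp, mul_comm (L ^ (p - 1))]
    exact mul_lt_mul_of_le_of_lt_of_nonneg_of_pos hbc hpc zero_le (zero_lt_iff.2 hL0)

end Valuation

/-- Let (K,v) be a henselian valued field of residue characteristic p > 0
containing all p-th roots of unity, and let b, c ∈ K with v(b) ≥ (1/(p-1))·v(p)
(multiplicatively: w b ^ (p-1) ≤ w p) and v(c^p) > v(p) (multiplicatively:
w (c^p) < w p). Then 1 + b - pc ∈ (1 + b + c^p)·(K^×)^p. -/
theorem stmt1 {K : Type*} [Field K] {Γ : Type*} [LinearOrderedCommGroupWithZero Γ]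
    (w : Valuation K Γ)
    (hhens : HenselianLocalRing w.valuationSubring)
    (p : ℕ) (hp : p.Prime)
    (hresp : w (p : K) < 1)  -- the residue characteristic is p
    (hroots : (Polynomial.X ^ p - 1 : Polynomial K).Splits)
    (b c : K) (hb : w b ^ (p - 1) ≤ w (p : K)) (hc : w (c ^ p) < w (p : K)) :
    ∃ u : Kˣ, 1 + b - p * c = (1 + b + c ^ p) * (u : K) ^ p := by
  have hpK : (p : K) ≠ 0 := fun h => not_lt_zero (by rwa [h, map_zero] at hc)
  obtain ⟨ζ, hζ⟩ := exists_isPrimitiveRoot_of_splits hp hpK hroots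
  set L := w (1 - ζ)
  have hwp : w (p : K) = L ^ (p - 1) := w.map_natCast_eq_of_isPrimitiveRoot hp hζ
  have hp1 : p - 1 ≠ 0 := Nat.sub_ne_zero_of_lt hp.one_lt
  have hL1 : L < 1 := (pow_lt_one_iff_of_nonneg zero_le hp1).1 (hwp ▸ hresp)
  have hL0 : L ≠ 0 := fun h => hpK (w.zero_iff.1 (by rw [hwp, h, zero_pow hp1]))
  have hbL : w b ≤ L := (pow_le_pow_iff_left₀ zero_le zero_le hp1).1 (hwp ▸ hb)
  have hcL : w c ^ p < L ^ (p - 1) := by rwa [← map_pow, ← hwp]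
  have hc1 : w c < 1 :=
    (pow_lt_one_iff_of_nonneg zero_le hp.ne_zero).1 (hcL.trans_le (pow_le_one₀ zero_le hL1.le))
  have h1b : w (1 + b) = 1 := w.map_one_add_of_lt (hbL.trans_lt hL1)
  have hA : w (1 + b + c ^ p) = 1 := by
    rw [w.map_add_eq_of_lt_left, h1b]
    rw [h1b, map_pow]
    exact pow_lt_one₀ zero_le hc1 hp.ne_zero
  have h1c : w (1 - c) = 1 := w.map_one_sub_of_lt hc1
  set D := (1 + b + c ^ p) * (1 - c) ^ p
  have hD : w D = 1 := by rw [map_mul, map_pow, hA, h1c, one_pow, one_mul]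
  have hD0 : D ≠ 0 := (w.ne_zero_iff).1 (by rw [hD]; exact one_ne_zero)
  obtain ⟨y, hy⟩ := w.exists_pow_eq_of_map_sub_one_lt hp hζ (x := (1 + b - p * c) / D) (by
    rw [div_sub_one hD0, ← neg_sub, map_div₀, Valuation.map_neg, hD, div_one]
    exact w.map_mul_one_sub_pow_sub_lt hp hL0 hL1.le hwp hbL hcL)
  refine ⟨y * Units.mk0 (1 - c) ((w.ne_zero_iff).1 (by rw [h1c]; exact one_ne_zero)), ?_⟩
  rw [Units.val_mul, mul_pow, hy, Units.val_mk0]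
  field_simp
  rw [mul_assoc]
end

section
/- Let (L,P) be a valued field with P = Q₁Q₂ a composition of places. Then (L,P) is henselian if and only if both (L,Q₁) and (LQ₁,Q₂) are henselian. -/
/-!
A local ring `R` is henselian iff every monic polynomial reducing to `X ^ n * (X + 1)` modulo
`𝔪_R` has a unit root. Indeed, if `f b ∈ 𝔪_R` and `f' b * v = 1`, Taylor expansion gives
`f (b + f b * v * y) = f b * G y` with `G ≡ 1 + X`, and the reverse of `G` is such a polynomial.
This criterion passes along every ring map `R → S` whose image contains `𝔪_S` (lift the
polynomial, push the root forward), so henselianity of `O_P` passes to its coarsening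
`O₁ ⊇ O_P`, as `𝔪₁ ⊆ O_P`, and to its quotient `O_P / 𝔪₁ = O₂`.

Conversely, a simple root of `f` modulo `𝔪_P` is first refined to a root modulo `𝔪₁` by
Hensel's lemma in `O₂`, and then to a root by Hensel's lemma in `O₁`; this root lies in `O_P`
since it is congruent modulo `𝔪₁ ⊆ O_P` to an element of `O_P`.
-/

open Polynomial IsLocalRing

theorem IsLocalRing.mem_maximalIdeal_of_map_mem {R S : Type*} [CommRing R] [IsLocalRing R]
    [CommRing S] [IsLocalRing S] (f : R →+* S) {x : R} (hx : f x ∈ maximalIdeal S) :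
    x ∈ maximalIdeal R :=
  fun hu => hx (hu.map f)

theorem IsLocalRing.map_residue_eq_map_residue_iff {R : Type*} [CommRing R] [IsLocalRing R]
    {p q : R[X]} :
    p.map (residue R) = q.map (residue R) ↔ ∀ j, p.coeff j - q.coeff j ∈ maximalIdeal R := by
  simp only [Polynomial.ext_iff, coeff_map, ← residue_eq_zero_iff, map_sub, sub_eq_zero]

theorem Polynomial.isUnit_eval_of_sub_mem_maximalIdeal {R : Type*} [CommRing R] [IsLocalRing R]
    (p : R[X]) {x y : R} (hx : IsUnit (p.eval x)) (hxy : y - x ∈ maximalIdeal R) :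
    IsUnit (p.eval y) := by
  rw [← residue_eq_zero_iff, map_sub, sub_eq_zero] at hxy
  rwa [← residue_ne_zero_iff_isUnit, ← eval_map_apply, hxy, eval_map_apply,
    residue_ne_zero_iff_isUnit]

theorem Polynomial.reflect_one_add_X {R : Type*} [Semiring R] {N : ℕ} (hN : 1 ≤ N) :
    reflect N (1 + X : R[X]) = X ^ (N - 1) * (X + 1) := by
  rw [reflect_add, reflect_one, ← pow_one X, reflect_monomial, revAt_le hN, mul_add, ← pow_succ,
    Nat.sub_add_cancel hN, mul_one, pow_one, add_comm]

theorem Polynomial.exists_rescaled_taylor_expansion {R : Type*} [CommRing R] [IsLocalRing R]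
    (f : R[X]) {b v : R} (hb : f.eval b ∈ maximalIdeal R) (hv : f.derivative.eval b * v = 1) :
    ∃ G : R[X], G.coeff 0 = 1 ∧ G.map (residue R) = 1 + X ∧
      ∀ y, f.eval (f.eval b * v * y + b) = f.eval b * G.eval y := by
  set a := f.eval b
  set F₂ := (taylor b f).divX.divX
  have hF : taylor b f = C a + X * (C (f.derivative.eval b) + X * F₂) := by
    conv_lhs => rw [← X_mul_divX_add (taylor b f), ← X_mul_divX_add (divX _)]
    simp only [coeff_divX, taylor_coeff_zero, taylor_coeff_one, zero_add]
    ring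
  refine ⟨1 + X + C (a * v ^ 2) * X ^ 2 * F₂.comp (C (a * v) * X), ?_, ?_, fun y => ?_⟩
  · simp [coeff_zero_eq_eval_zero]
  · simp [(residue_eq_zero_iff a).2 hb]
  · rw [← taylor_eval, hF]
    simp only [eval_add, eval_mul, eval_C, eval_X, eval_one, eval_pow, eval_comp]
    linear_combination (a * y) * hv

def HasUnitRootsOfResidueXPowMulXAddOne (R : Type*) [CommRing R] [IsLocalRing R] : Prop :=
  ∀ (H : R[X]) (n : ℕ), H.Monic → H.map (residue R) = X ^ n * (X + 1) → ∃ w, H.IsRoot w ∧ IsUnit w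

namespace HasUnitRootsOfResidueXPowMulXAddOne

theorem exists_isUnit_isRoot {R : Type*} [CommRing R] [IsLocalRing R]
    (hR : HasUnitRootsOfResidueXPowMulXAddOne R) {G : R[X]} (hG₀ : G.coeff 0 = 1)
    (hG : G.map (residue R) = 1 + X) : ∃ y, IsUnit y ∧ G.IsRoot y := by
  have hdeg : 1 ≤ G.natDegree := by
    have := natDegree_map_le (f := residue R) (p := G)
    rwa [hG, add_comm, ← C_1, natDegree_X_add_C] at this
  have hmonic : G.reverse.Monic := by
    rw [Monic, reverse_leadingCoeff, trailingCoeff_eq_coeff_zero (by simp [hG₀]), hG₀]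
  have hred : G.reverse.map (residue R) = X ^ (G.natDegree - 1) * (X + 1) := by
    rw [reverse, ← reflect_map, hG, reflect_one_add_X hdeg]
  obtain ⟨_, hw, ⟨W, rfl⟩⟩ := hR _ _ hmonic hred
  refine ⟨↑W⁻¹, (W⁻¹).isUnit, ?_⟩
  let := (W⁻¹).invertible
  rw [IsRoot, ← eval₂_id, ← eval₂_reverse_eq_zero_iff, invOf_units, inv_inv, eval₂_id]
  exact hw

theorem of_maximalIdeal_subset_range {R S : Type*} [CommRing R] [IsLocalRing R] [CommRing S]
    [IsLocalRing S] (f : R →+* S) (hf : ∀ x ∈ maximalIdeal S, x ∈ f.range)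
    (hR : HasUnitRootsOfResidueXPowMulXAddOne R) : HasUnitRootsOfResidueXPowMulXAddOne S := by
  intro H n hH hred
  have hcoeff : ∀ j, H.coeff j - (X ^ n * (X + 1) : S[X]).coeff j ∈ maximalIdeal S :=
    map_residue_eq_map_residue_iff.1 (by simp [hred])
  have hlifts : H ∈ lifts f := by
    rw [← sub_add_cancel H (X ^ n * (X + 1))]
    refine add_mem ((lifts_iff_coeff_lifts _).2 fun j => hf _ ?_)
      (mul_mem (X_pow_mem_lifts f n) (add_mem (X_mem_lifts f) (one_mem _)))
    rw [coeff_sub]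
    exact hcoeff j
  obtain ⟨HR, hmap, -, hHR⟩ := lifts_and_natDegree_eq_and_monic hlifts hH
  have hredR : HR.map (residue R) = X ^ n * (X + 1) := by
    rw [show (X ^ n * (X + 1) : (ResidueField R)[X]) = (X ^ n * (X + 1) : R[X]).map (residue R)
      by simp, map_residue_eq_map_residue_iff]
    intro j
    apply mem_maximalIdeal_of_map_mem f
    rw [map_sub, ← coeff_map, ← coeff_map, hmap, show (X ^ n * (X + 1) : R[X]).map f =
      X ^ n * (X + 1) by simp]
    exact hcoeff j
  obtain ⟨w, hw, hwu⟩ := hR HR n hHR hredR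
  exact ⟨f w, hmap ▸ hw.map, hwu.map f⟩

end HasUnitRootsOfResidueXPowMulXAddOne

namespace HenselianLocalRing

theorem hasUnitRootsOfResidueXPowMulXAddOne {R : Type*} [CommRing R] [HenselianLocalRing R] :
    HasUnitRootsOfResidueXPowMulXAddOne R := by
  intro H n hH hred
  have hval : H.eval (-1) ∈ maximalIdeal R := by
    rw [← residue_eq_zero_iff, ← eval_map_apply, hred]
    simp
  have hder : IsUnit (H.derivative.eval (-1)) := by
    rw [← residue_ne_zero_iff_isUnit, ← eval_map_apply, ← derivative_map, hred]
    simp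
  obtain ⟨w, hroot, hw⟩ := is_henselian H hH (-1) hval hder
  refine ⟨w, hroot, ?_⟩
  rw [← residue_eq_zero_iff, map_sub, map_neg, map_one, sub_neg_eq_add,
    add_eq_zero_iff_eq_neg] at hw
  rw [← residue_ne_zero_iff_isUnit, hw]
  simp

theorem of_hasUnitRootsOfResidueXPowMulXAddOne {R : Type*} [CommRing R] [IsLocalRing R]
    (hR : HasUnitRootsOfResidueXPowMulXAddOne R) : HenselianLocalRing R where
  is_henselian f _ b hb hu := by
    obtain ⟨v, hv⟩ := isUnit_iff_exists_inv.1 hu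
    obtain ⟨G, hG₀, hG, hfG⟩ := f.exists_rescaled_taylor_expansion hb hv
    obtain ⟨y, -, hy⟩ := hR.exists_isUnit_isRoot hG₀ hG
    refine ⟨f.eval b * v * y + b, ?_, ?_⟩
    · rw [IsRoot, hfG, hy, mul_zero]
    · rw [add_sub_cancel_right]
      exact Ideal.mul_mem_right _ _ (Ideal.mul_mem_right _ _ hb)

theorem of_maximalIdeal_subset_range {R S : Type*} [CommRing R] [HenselianLocalRing R]
    [CommRing S] [IsLocalRing S] (f : R →+* S) (hf : ∀ x ∈ maximalIdeal S, x ∈ f.range) :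
    HenselianLocalRing S :=
  of_hasUnitRootsOfResidueXPowMulXAddOne
    (hasUnitRootsOfResidueXPowMulXAddOne.of_maximalIdeal_subset_range f hf)

theorem of_henselian_overring_of_henselian_quotient
    {R O S : Type*} [CommRing R] [IsLocalRing R] [CommRing O] [HenselianLocalRing O]
    [CommRing S] [HenselianLocalRing S]
    (ι : R →+* O) (hι : Function.Injective ι) (hιm : ∀ x ∈ maximalIdeal O, x ∈ ι.range)
    (ρ : R →+* S) (hρ : Function.Surjective ρ) (hker : ∀ x, ρ x = 0 ↔ ι x ∈ maximalIdeal O) :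
    HenselianLocalRing R where
  is_henselian f hf a₀ h₁ h₂ := by
    have : IsLocalHom ρ := .of_surjective ρ hρ
    obtain ⟨α, hα, hαa₀⟩ := is_henselian (f.map ρ) (hf.map ρ) (ρ a₀)
      (by rw [eval_map_apply]; exact map_nonunit ρ _ h₁)
      (by rw [derivative_map, eval_map_apply]; exact h₂.map ρ)
    obtain ⟨a₁, rfl⟩ := hρ α
    have hroot : (f.map ι).eval (ι a₁) ∈ maximalIdeal O := by
      rw [eval_map_apply, ← hker, ← eval_map_apply]
      exact hα
    have hunit : IsUnit ((f.map ι).derivative.eval (ι a₁)) := by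
      have hS : IsUnit (ρ (f.derivative.eval a₁)) := by
        rw [← eval_map_apply, ← derivative_map]
        refine isUnit_eval_of_sub_mem_maximalIdeal _ ?_ hαa₀
        rw [derivative_map, eval_map_apply]
        exact h₂.map ρ
      rw [derivative_map, eval_map_apply, ← residue_ne_zero_iff_isUnit, Ne, residue_eq_zero_iff,
        ← hker]
      exact hS.ne_zero
    obtain ⟨c, hc, hca₁⟩ := is_henselian (f.map ι) (hf.map ι) (ι a₁) hroot hunit
    obtain ⟨r, rfl⟩ : c ∈ ι.range := sub_add_cancel c (ι a₁) ▸ add_mem (hιm _ hca₁) ⟨a₁, rfl⟩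
    refine ⟨r, hι ?_, ?_⟩
    · rw [map_zero, ← eval_map_apply]
      exact hc
    · rw [← sub_add_sub_cancel r a₁ a₀]
      exact add_mem (mem_maximalIdeal_of_map_mem ι (by rwa [map_sub]))
        (mem_maximalIdeal_of_map_mem ρ (by rwa [map_sub]))

end HenselianLocalRing

namespace ValuationSubring

variable {L : Type*} [Field L]

/-- `OP` is the valuation ring of the composite place `P = Q₁Q₂`. -/
def IsComposite (O₁ : ValuationSubring L) (O₂ : ValuationSubring (ResidueField O₁))
    (OP : ValuationSubring L) : Prop :=
  ∀ x : L, x ∈ OP ↔ ∃ hx : x ∈ O₁, residue O₁ ⟨x, hx⟩ ∈ O₂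

namespace IsComposite

variable {O₁ OP : ValuationSubring L} {O₂ : ValuationSubring (ResidueField O₁)}

theorem le (h : IsComposite O₁ O₂ OP) : OP ≤ O₁ := fun x hx => ((h x).1 hx).1

theorem maximalIdeal_subset_range (h : IsComposite O₁ O₂ OP) (x : O₁)
    (hx : x ∈ maximalIdeal O₁) : x ∈ (OP.inclusion O₁ h.le).range :=
  ⟨⟨x, (h x).2 ⟨x.2, by simp [(IsLocalRing.residue_eq_zero_iff x).2 hx]⟩⟩, rfl⟩

noncomputable def residue (h : IsComposite O₁ O₂ OP) : OP →+* O₂ :=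
  ((IsLocalRing.residue O₁).comp (OP.inclusion O₁ h.le)).codRestrict O₂ fun x => ((h x).1 x.2).2

theorem residue_surjective (h : IsComposite O₁ O₂ OP) : Function.Surjective h.residue := by
  rintro ⟨y, hy⟩
  obtain ⟨z, rfl⟩ := IsLocalRing.residue_surjective y
  exact ⟨⟨z, (h z).2 ⟨z.2, hy⟩⟩, rfl⟩

theorem residue_eq_zero_iff (h : IsComposite O₁ O₂ OP) (x : OP) :
    h.residue x = 0 ↔ OP.inclusion O₁ h.le x ∈ maximalIdeal O₁ := by
  rw [← IsLocalRing.residue_eq_zero_iff, ← Subtype.val_inj]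
  rfl

end IsComposite

end ValuationSubring

/-- Let (L,P) be a valued field with P = Q₁Q₂ a composition of places:
the valuation ring O_P of P is the preimage, under the residue map of the valuation
ring O₁ of Q₁, of the valuation ring O₂ of Q₂ on the residue field LQ₁.  Then (L,P)
is henselian if and only if both (L,Q₁) and (LQ₁,Q₂) are henselian. -/
theorem stmt11 {L : Type*} [Field L]
    (O₁ OP : ValuationSubring L)
    (O₂ : ValuationSubring (IsLocalRing.ResidueField O₁))
    (hcomp : ∀ x : L, x ∈ OP ↔ ∃ hx : x ∈ O₁, IsLocalRing.residue O₁ ⟨x, hx⟩ ∈ O₂) :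
    HenselianLocalRing OP ↔ (HenselianLocalRing O₁ ∧ HenselianLocalRing O₂) := by
  have h : ValuationSubring.IsComposite O₁ O₂ OP := hcomp
  constructor
  · intro hP
    exact ⟨.of_maximalIdeal_subset_range _ h.maximalIdeal_subset_range,
      .of_maximalIdeal_subset_range _ fun x _ => h.residue_surjective x⟩
  · rintro ⟨h₁, h₂⟩
    exact .of_henselian_overring_of_henselian_quotient _
      (Subring.inclusion_injective h.le) h.maximalIdeal_subset_range
      _ h.residue_surjective h.residue_eq_zero_iff
end
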